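/- For every μ ∈ M_1(Δ), one has the identity I_V(μ) = I_𝒱(T_*μ). -/

import Mathlib

open MeasureTheory Filter Topology
open scoped ENNReal NNReal

/-- `⊤`-aware positive part of an extended real, as a value in `ℝ≥0∞`. -/
noncomputable def EReal.posPart' (x : EReal) : ℝ≥0∞ :=
  if x = ⊤ then ⊤ else ENNReal.ofReal x.toReal

/-- Integral of an `EReal`-valued function: positive part minus negative part. -/
noncomputable def eIntegral {α : Type*} [MeasurableSpace α] (μ : Measure α) (f : α → EReal) :
    EReal :=
  ((∫⁻ x, (f x).posPart' ∂μ : ℝ≥0∞) : EReal) - ((∫⁻ x, (-(f x)).posPart' ∂μ : ℝ≥0∞) : EReal)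

/-- `log (1/r)` as an extended real, equal to `+∞` at `r = 0`. -/
noncomputable def negLog (r : ℝ) : EReal :=
  if r = 0 then ⊤ else ((- Real.log r : ℝ) : EReal)

/-- The weighted logarithmic kernel `F_W(x,y) = (β/2) log(1/|x-y|) + W(x)/2 + W(y)/2`. -/
noncomputable def kern {α : Type*} [PseudoMetricSpace α] (β : ℝ) (W : α → EReal) (x y : α) :
    EReal :=
  ((β / 2 : ℝ) : EReal) * negLog (dist x y) + ((2⁻¹ : ℝ) : EReal) * W x
    + ((2⁻¹ : ℝ) : EReal) * W y

/-- The weighted logarithmic energy `I_W(μ) = ∬ F_W(x,y) dμ(x) dμ(y)`. -/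
noncomputable def energy {α : Type*} [MeasurableSpace α] [PseudoMetricSpace α] (β : ℝ)
    (W : α → EReal) (μ : Measure α) : EReal :=
  eIntegral (μ.prod μ) (fun p => kern β W p.1 p.2)

/-- The set of (Borel) probability measures carried by the closed set `Δ`,
i.e. `M_1(Δ)` viewed inside the probability measures on the ambient space. -/
def M1 {α : Type*} [MeasurableSpace α] [TopologicalSpace α]
    (Δ : Set α) : Set (ProbabilityMeasure α) :=
  {μ | (μ : Measure α) Δᶜ = 0}

/-- The filter `|x| → ∞, x ∈ Δ`. -/
noncomputable def atComplexInftyWithin (Δ : Set ℂ) : Filter ℂ :=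
  (Filter.comap (fun x : ℂ => ‖x‖) Filter.atTop) ⊓ Filter.principal Δ

/-- The weak growth assumption : `liminf_{|x| → ∞, x ∈ Δ} (V(x) - β' log |x|) > -∞`
for some `β' > 1` with `β' ≥ β`. -/
def WeakGrowth (β : ℝ) (Δ : Set ℂ) (V : ℂ → ℝ) : Prop :=
  ∃ β' : ℝ, 1 < β' ∧ β ≤ β' ∧
    (⊥ : EReal) <
      Filter.liminf (fun x : ℂ => ((V x - β' * Real.log (‖x‖) : ℝ) : EReal))
        (atComplexInftyWithin Δ)

/-- The inverse stereographic projection from `ℂ` onto the Riemann sphere `S ⊂ ℝ³`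
(the sphere of radius `1/2` centered at `(0,0,1/2)`). -/
noncomputable def Tst (x : ℂ) : EuclideanSpace ℝ (Fin 3) :=
  (EuclideanSpace.equiv (Fin 3) ℝ).symm
    ![x.re / (1 + ‖x‖ ^ 2), x.im / (1 + ‖x‖ ^ 2),
      ‖x‖ ^ 2 / (1 + ‖x‖ ^ 2)]

/-- The north pole `∞ = (0,0,1)` of the Riemann sphere. -/
noncomputable def sInfty : EuclideanSpace ℝ (Fin 3) :=
  (EuclideanSpace.equiv (Fin 3) ℝ).symm ![0, 0, 1]

lemma continuous_Tst : Continuous Tst := by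
  refine ((EuclideanSpace.equiv (Fin 3) ℝ).symm.continuous).comp ?_
  have h : Continuous fun x : ℂ => 1 + ‖x‖ ^ 2 :=
    continuous_const.add (continuous_norm.pow 2)
  have hne : ∀ x : ℂ, 1 + ‖x‖ ^ 2 ≠ 0 := fun x => by positivity
  refine continuous_pi fun i => ?_
  fin_cases i
  · simp; exact Complex.continuous_re.div h hne
  · simp; exact Complex.continuous_im.div h hne
  · simp; exact (continuous_norm.pow 2).div h hne

/-- Push-forward of a probability measure by the inverse stereographic projection `T`. -/
noncomputable def pushT (μ : ProbabilityMeasure ℂ) :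
    ProbabilityMeasure (EuclideanSpace ℝ (Fin 3)) :=
  μ.map continuous_Tst.measurable.aemeasurable

/-- `Δ_S`, the closure in the sphere of the image of `Δ` by `T`. -/
noncomputable def deltaS (Δ : Set ℂ) : Set (EuclideanSpace ℝ (Fin 3)) :=
  closure (Tst '' Δ)

/-- The weak growth assumption for an extended-real-valued potential:
`liminf_{|x| → ∞, x ∈ Δ} (V(x) - β' log |x|) > -∞` for some `β' > 1` with `β' ≥ β`. -/
def WeakGrowthE (β : ℝ) (Δ : Set ℂ) (V : ℂ → EReal) : Prop :=
  ∃ β' : ℝ, 1 < β' ∧ β ≤ β' ∧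
    (⊥ : EReal) <
      Filter.liminf
        (fun x : ℂ => V x - ((β' * Real.log (‖x‖) : ℝ) : EReal))
        (atComplexInftyWithin Δ)

/-- The defining property of the potential `𝒱` on the sphere built from `V`:
`𝒱(T x) = V(x) - (β/2) log (1+|x|²)` on `Δ` and
`𝒱(∞) = liminf_{|x|→∞, x ∈ Δ} (V(x) - (β/2) log (1+|x|²))`. -/
def IsSpherePotential (β : ℝ) (Δ : Set ℂ) (V : ℂ → EReal)
    (𝒱 : EuclideanSpace ℝ (Fin 3) → EReal) : Prop :=
  (∀ x ∈ Δ, 𝒱 (Tst x) =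
      V x - ((β / 2 * Real.log (1 + ‖x‖ ^ 2) : ℝ) : EReal)) ∧
    𝒱 sInfty =
      Filter.liminf
        (fun x : ℂ => V x - ((β / 2 * Real.log (1 + ‖x‖ ^ 2) : ℝ) : EReal))
        (atComplexInftyWithin Δ)

/-!
The chordal distance on the sphere is conformal to the Euclidean one:
`|T x - T y| = |x - y| / (√(1+|x|²) √(1+|y|²))`. Hence `(β/2) log (1/|T x - T y|)` exceeds
`(β/2) log (1/|x - y|)` by `(β/4) log (1+|x|²) + (β/4) log (1+|y|²)`, which is exactly what the
correction in `𝒱` removes, so `F_𝒱 (T x) (T y) = F_V x y` on `Δ × Δ` (also when the values are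
infinite). Since `T` is a continuous injection of a Polish space, it is a measurable embedding, and
the change of variables for the lower integrals needs no measurability of the integrands.
-/

lemma EReal.coe_mul_add_coe (c r : ℝ) (x : EReal) :
    (c : EReal) * (x + r) = c * x + (c * r : ℝ) := by
  induction x with
  | bot => rcases lt_trichotomy c 0 with hc | rfl | hc <;>
      simp [*, EReal.coe_mul_bot_of_neg, EReal.coe_mul_bot_of_pos, -EReal.coe_mul]
  | coe x => norm_cast; ring
  | top => rcases lt_trichotomy c 0 with hc | rfl | hc <;>
      simp [*, EReal.coe_mul_top_of_neg, EReal.coe_mul_top_of_pos, -EReal.coe_mul]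

lemma negLog_div (r : ℝ) {s : ℝ} (hs : 0 < s) :
    negLog (r / s) = negLog r + (Real.log s : ℝ) := by
  rcases eq_or_ne r 0 with rfl | hr
  · simp [negLog]
  · rw [negLog, negLog, if_neg (div_ne_zero hr hs.ne'), if_neg hr, ← EReal.coe_add,
      Real.log_div hr hs.ne']
    ring_nf

lemma kern_eq_of_dist_eq_div {α γ : Type*} [PseudoMetricSpace α] [PseudoMetricSpace γ]
    {β : ℝ} {V : α → EReal} {W : γ → EReal} {T : α → γ} {w : α → ℝ} {x y : α}
    (hwx : 0 < w x) (hwy : 0 < w y) (hdist : dist (T x) (T y) = dist x y / (w x * w y))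
    (hWx : W (T x) = V x - (β * Real.log (w x) : ℝ))
    (hWy : W (T y) = V y - (β * Real.log (w y) : ℝ)) :
    kern β W (T x) (T y) = kern β V x y := by
  have hshift : β / 2 * Real.log (w x * w y) + 2⁻¹ * -(β * Real.log (w x))
      + 2⁻¹ * -(β * Real.log (w y)) = 0 := by
    rw [Real.log_mul hwx.ne' hwy.ne']; ring
  simp only [kern, hdist, negLog_div _ (mul_pos hwx hwy), hWx, hWy, sub_eq_add_neg,
    ← EReal.coe_neg, EReal.coe_mul_add_coe]
  calc _ = ((β / 2 : ℝ) : EReal) * negLog (dist x y) + ((2⁻¹ : ℝ) : EReal) * V x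
          + ((2⁻¹ : ℝ) : EReal) * V y
          + ((β / 2 * Real.log (w x * w y) + 2⁻¹ * -(β * Real.log (w x))
            + 2⁻¹ * -(β * Real.log (w y)) : ℝ) : EReal) := by push_cast; abel
    _ = _ := by rw [hshift, EReal.coe_zero, add_zero]

lemma dist_Tst (x y : ℂ) :
    dist (Tst x) (Tst y) = dist x y / (√(1 + ‖x‖ ^ 2) * √(1 + ‖y‖ ^ 2)) := by
  have hx : 0 < 1 + ‖x‖ ^ 2 := by positivity
  have hy : 0 < 1 + ‖y‖ ^ 2 := by positivity
  rw [EuclideanSpace.dist_eq, ← Real.sqrt_mul hx.le, ← Real.sqrt_sq dist_nonneg,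
    ← Real.sqrt_div' _ (mul_pos hx hy).le]
  congr 1
  simp [Tst, EuclideanSpace.equiv, Fin.sum_univ_three, Real.dist_eq, Complex.dist_eq,
    Complex.sq_norm, Complex.normSq_apply] at hx hy ⊢
  field_simp
  ring

lemma Tst_injective : Function.Injective Tst := by
  intro x y h
  have hpos : 0 < √(1 + ‖x‖ ^ 2) * √(1 + ‖y‖ ^ 2) := by positivity
  have hdist := dist_Tst x y
  rw [h, dist_self, eq_comm, div_eq_zero_iff, dist_eq_zero] at hdist
  exact hdist.resolve_right hpos.ne'

lemma measurableEmbedding_Tst : MeasurableEmbedding Tst :=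
  continuous_Tst.measurableEmbedding Tst_injective

lemma IsSpherePotential.apply_Tst {β : ℝ} {Δ : Set ℂ} {V : ℂ → EReal}
    {𝒱 : EuclideanSpace ℝ (Fin 3) → EReal} (h𝒱 : IsSpherePotential β Δ V 𝒱) {x : ℂ}
    (hx : x ∈ Δ) : 𝒱 (Tst x) = V x - (β * Real.log √(1 + ‖x‖ ^ 2) : ℝ) := by
  rw [h𝒱.1 x hx, Real.log_sqrt (by positivity)]
  ring_nf

lemma eIntegral_congr_ae {α : Type*} [MeasurableSpace α] {μ : Measure α} {f g : α → EReal}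
    (h : f =ᵐ[μ] g) : eIntegral μ f = eIntegral μ g := by
  rw [eIntegral, eIntegral, lintegral_congr_ae (h.mono fun _ hx => congrArg EReal.posPart' hx),
    lintegral_congr_ae (h.mono fun _ hx => congrArg (fun y => (-y).posPart') hx)]

lemma MeasurableEmbedding.eIntegral_map {α β : Type*} [MeasurableSpace α] [MeasurableSpace β]
    {g : α → β} (hg : MeasurableEmbedding g) (μ : Measure α) (f : β → EReal) :
    eIntegral (μ.map g) f = eIntegral μ (f ∘ g) := by
  simp only [eIntegral, hg.lintegral_map, Function.comp_apply]

theorem energy_pushforward_eq_general (β : ℝ) (Δ : Set ℂ) (V : ℂ → EReal)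
    (𝒱 : EuclideanSpace ℝ (Fin 3) → EReal) (h𝒱 : IsSpherePotential β Δ V 𝒱)
    (μ : ProbabilityMeasure ℂ) (hμ : μ ∈ M1 Δ) :
    energy β V (μ : Measure ℂ) =
      energy β 𝒱 (pushT μ : Measure (EuclideanSpace ℝ (Fin 3))) := by
  have hΔ : ∀ᵐ x ∂(μ : Measure ℂ), x ∈ Δ := hμ
  have hΔ₂ : ∀ᵐ p ∂(μ : Measure ℂ).prod μ, p.1 ∈ Δ ∧ p.2 ∈ Δ :=
    (Measure.quasiMeasurePreserving_fst.ae hΔ).and (Measure.quasiMeasurePreserving_snd.ae hΔ)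
  rw [energy, energy, pushT, ProbabilityMeasure.toMeasure_map,
    Measure.map_prod_map _ _ continuous_Tst.measurable continuous_Tst.measurable,
    (measurableEmbedding_Tst.prodMap measurableEmbedding_Tst).eIntegral_map]
  refine eIntegral_congr_ae ?_
  filter_upwards [hΔ₂] with p ⟨hx, hy⟩
  exact (kern_eq_of_dist_eq_div (w := fun x => √(1 + ‖x‖ ^ 2)) (by positivity) (by positivity)
    (dist_Tst p.1 p.2) (h𝒱.apply_Tst hx) (h𝒱.apply_Tst hy)).symm

theorem energy_pushforward_eq (β : ℝ) (hβ : 0 < β) (Δ : Set ℂ) (hΔclosed : IsClosed Δ)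
    (hΔunbounded : ¬ Bornology.IsBounded Δ)
    (V : ℂ → EReal) (hVbot : ∀ x ∈ Δ, V x ≠ ⊥) (hVlsc : LowerSemicontinuousOn V Δ)
    (hgrowth : WeakGrowthE β Δ V)
    (𝒱 : EuclideanSpace ℝ (Fin 3) → EReal) (h𝒱 : IsSpherePotential β Δ V 𝒱)
    (μ : ProbabilityMeasure ℂ) (hμ : μ ∈ M1 Δ) :
    energy β V (μ : Measure ℂ) =
      energy β 𝒱 (pushT μ : Measure (EuclideanSpace ℝ (Fin 3))) :=
  energy_pushforward_eq_general β Δ V 𝒱 h𝒱 μ hμ
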